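/- arXiv:2303.16003 — 2 statements merged into one kernel-verified Lean document; each statement's English description precedes it below -/
import Mathlib

section
/- Let (X, ρ) be a compact metric space, let n be a positive integer, and equip X^n with the sup-metric ρ_∞((x_i),(y_i)) = max_i ρ(x_i, y_i). For every ε > 0, the ε-width dimension is subadditive: Widim_ε(X^{m+n}, ρ_∞) ≤ Widim_ε(X^m, ρ_∞) + Widim_ε(X^n, ρ_∞) for all positive integers m, n. -/
open Set Filter Topology ENNReal

def covDimLE (X : Type*) [TopologicalSpace X] (n : ℕ) : Prop :=
  ∀ (ι : Type) (U : ι → Set X), Finite ι → (∀ i, IsOpen (U i)) → (⋃ i, U i) = univ →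
    ∃ (κ : Type) (V : κ → Set X), Finite κ ∧ (∀ k, IsOpen (V k)) ∧ (⋃ k, V k) = univ ∧
      (∀ k, ∃ i, V k ⊆ U i) ∧ ∀ x : X, {k | x ∈ V k}.ncard ≤ n + 1

/-- The Lebesgue covering dimension of a topological space, valued in `ℕ∞`
(`⊤` means infinite-dimensional). -/
noncomputable def covDim (X : Type*) [TopologicalSpace X] : ℕ∞ :=
  sInf {m : ℕ∞ | ∃ n : ℕ, m = n ∧ covDimLE X n}

/-- `Widim_ε(X, ρ)`: the minimal covering dimension of a compact metrizable space `P`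
admitting a continuous `ε`-embedding `f : X → P` (i.e. `f x = f y → dist x y < ε`). -/
noncomputable def widim (X : Type*) (mX : MetricSpace X) (ε : ℝ) : ℕ∞ :=
  sInf {k : ℕ∞ | ∃ (P : Type) (_ : MetricSpace P) (_ : CompactSpace P)
    (f : X → P), @Continuous X P mX.toUniformSpace.toTopologicalSpace _ f ∧
      (∀ x y : X, f x = f y → @dist X mX.toDist x y < ε) ∧ covDim P = k}

/-!
If `f : X^m → P` and `g : X^n → Q` are `ε`-embeddings realizing the two widths, then `f × g` is
an `ε`-embedding of `X^m × X^n ≅ X^(m+n)` (sup-metrics) into `P × Q`, so everything rests on the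
product inequality `dim (P × Q) ≤ dim P + dim Q` for compact metric spaces. By Ostrand's theorem,
for every finite open cover of a `p`-dimensional space and every `k > p` there are `k` layers,
each a finite family of disjoint open sets refining the cover, such that every point lies in all
but at most `p` of them. Taking `k = p + q + 1` for covers of `P` and `Q` by `δ`-balls, `δ` a
Lebesgue number, the products `A × B` of members of equally indexed layers form `p + q + 1`
disjoint layers refining the given cover of `P × Q` and covering it, i.e. a refinement of order
at most `p + q + 1`.
-/

open Function

structure IsDisjointOpenRefinement {X : Type*} [TopologicalSpace X] {ι : Type*}
    (U : ι → Set X) (F : Set (Set X)) : Prop where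
  finite : F.Finite
  isOpen : ∀ A ∈ F, IsOpen A
  pairwise_disjoint : F.Pairwise Disjoint
  refines : ∀ A ∈ F, ∃ i, A ⊆ U i

namespace IsDisjointOpenRefinement

variable {X Y : Type*} [TopologicalSpace X] [TopologicalSpace Y] {ι ι' κ : Type*}
  {U : ι → Set X} {F : Set (Set X)}

theorem mono (hF : IsDisjointOpenRefinement U F) {U' : ι' → Set X} (hU : ∀ i, ∃ j, U i ⊆ U' j) :
    IsDisjointOpenRefinement U' F where
  finite := hF.finite
  isOpen := hF.isOpen
  pairwise_disjoint := hF.pairwise_disjoint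
  refines A hA := by
    obtain ⟨i, hi⟩ := hF.refines A hA
    obtain ⟨j, hj⟩ := hU i
    exact ⟨j, hi.trans hj⟩

theorem prod (hF : IsDisjointOpenRefinement U F) {V : κ → Set Y} {G : Set (Set Y)}
    (hG : IsDisjointOpenRefinement V G) :
    IsDisjointOpenRefinement (fun p : ι × κ => U p.1 ×ˢ V p.2) (image2 (· ×ˢ ·) F G) where
  finite := hF.finite.image2 _ hG.finite
  isOpen := by
    rintro _ ⟨A, hA, B, hB, rfl⟩
    exact (hF.isOpen A hA).prod (hG.isOpen B hB)
  pairwise_disjoint := by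
    rintro _ ⟨A, hA, B, hB, rfl⟩ _ ⟨A', hA', B', hB', rfl⟩ hne
    rw [Set.disjoint_prod]
    by_cases hAA' : A = A'
    · subst hAA'
      exact Or.inr (hG.pairwise_disjoint hB hB' fun h => hne (h ▸ rfl))
    · exact Or.inl (hF.pairwise_disjoint hA hA' hAA')
  refines := by
    rintro _ ⟨A, hA, B, hB, rfl⟩
    obtain ⟨i, hi⟩ := hF.refines A hA
    obtain ⟨j, hj⟩ := hG.refines B hB
    exact ⟨(i, j), prod_mono hi hj⟩

theorem iUnion_inter {σ : Type*} [Finite σ] {F : σ → Set (Set X)}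
    (hF : ∀ j, IsDisjointOpenRefinement U (F j)) {O : σ → Set X} (hO : ∀ j, IsOpen (O j))
    (hdisj : Pairwise (Disjoint on O)) :
    IsDisjointOpenRefinement U (⋃ j, (· ∩ O j) '' F j) where
  finite := finite_iUnion fun j => (hF j).finite.image _
  isOpen := by
    simp only [mem_iUnion, mem_image]
    rintro _ ⟨j, A, hA, rfl⟩
    exact ((hF j).isOpen A hA).inter (hO j)
  pairwise_disjoint := by
    simp only [Set.Pairwise, mem_iUnion, mem_image]
    rintro _ ⟨j, A, hA, rfl⟩ _ ⟨j', A', hA', rfl⟩ hne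
    by_cases hjj' : j = j'
    · subst hjj'
      exact ((hF j).pairwise_disjoint hA hA' fun h => hne (h ▸ rfl)).mono
        inter_subset_left inter_subset_left
    · exact (hdisj hjj').mono inter_subset_right inter_subset_right
  refines := by
    simp only [mem_iUnion, mem_image]
    rintro _ ⟨j, A, hA, rfl⟩
    obtain ⟨i, hi⟩ := (hF j).refines A hA
    exact ⟨i, inter_subset_left.trans hi⟩

end IsDisjointOpenRefinement

section Order

variable {α κ : Type*} [Finite κ] {W : κ → Set α} {N : ℕ}

theorem lt_ncard_setOf_mem_iff {x : α} :
    N < {t | x ∈ W t}.ncard ↔ ∃ T : Finset κ, T.card = N + 1 ∧ x ∈ ⋂ t ∈ T, W t := by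
  constructor
  · intro h
    have hfin := toFinite {t | x ∈ W t}
    obtain ⟨T, hT, hcard⟩ := Finset.exists_subset_card_eq (s := hfin.toFinset) (n := N + 1)
      (by rwa [← ncard_eq_toFinset_card _ hfin])
    exact ⟨T, hcard, mem_iInter₂.2 fun t ht => hfin.mem_toFinset.1 (hT ht)⟩
  · rintro ⟨T, hcard, hx⟩
    have hsub : (T : Set κ) ⊆ {t | x ∈ W t} := fun t ht => mem_iInter₂.1 hx t ht
    have := ncard_le_ncard hsub
    rw [ncard_coe_finset] at this
    omega

theorem disjoint_biInter_of_ncard_le (hW : ∀ x, {t | x ∈ W t}.ncard ≤ N) {T T' : Finset κ}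
    (hT : T.card = N) (hT' : T'.card = N) (hne : T ≠ T') :
    Disjoint (⋂ t ∈ T, W t) (⋂ t ∈ T', W t) := by
  classical
  rw [Set.disjoint_left]
  intro x hx hx'
  have hsub : ((T ∪ T' : Finset κ) : Set κ) ⊆ {t | x ∈ W t} := by
    intro t ht
    rcases Finset.mem_union.1 ht with h | h
    exacts [mem_iInter₂.1 hx t h, mem_iInter₂.1 hx' t h]
  have hlt : N < (T ∪ T').card := by
    by_contra! hle
    exact hne ((Finset.eq_of_subset_of_card_le Finset.subset_union_left (hT ▸ hle)).trans
      (Finset.eq_of_subset_of_card_le Finset.subset_union_right (hT' ▸ hle)).symm)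
  have := ncard_le_ncard hsub
  rw [ncard_coe_finset] at this
  exact (hW x).not_gt (hlt.trans_le this)

end Order

section Layers

variable {X : Type*} [TopologicalSpace X] {κ : Type*} [Finite κ] {W : κ → Set X} {C : Set X}

theorem IsDisjointOpenRefinement.biInter_card_eq {N : ℕ} (hW : ∀ t, IsOpen (W t))
    (hord : ∀ x, {t | x ∈ W t}.ncard ≤ N + 1) :
    IsDisjointOpenRefinement W ((fun T : Finset κ => ⋂ t ∈ T, W t) '' {T | T.card = N + 1}) where
  finite := toFinite _
  isOpen := by
    rintro _ ⟨T, -, rfl⟩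
    exact isOpen_biInter_finset fun t _ => hW t
  pairwise_disjoint := by
    rintro _ ⟨T, hT, rfl⟩ _ ⟨T', hT', rfl⟩ hne
    exact disjoint_biInter_of_ncard_le hord hT hT' fun h => hne (h ▸ rfl)
  refines := by
    rintro _ ⟨T, hT, rfl⟩
    obtain ⟨t, ht⟩ := Finset.card_pos.1 (hT.symm ▸ N.succ_pos : 0 < T.card)
    exact ⟨t, biInter_subset_of_mem ht⟩

/-- Shrink `W` so that `closure (v t) ⊆ W t`; the points lying in `N + 1` of these closures form
a closed set which misses `C`, and removing it from every `v t` caps the order at `N`. -/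
theorem exists_shrink_ncard_le [NormalSpace X] (hC : IsClosed C) (hW : ∀ t, IsOpen (W t))
    (hCW : C ⊆ ⋃ t, W t) {N : ℕ} (hord : ∀ x ∈ C, {t | x ∈ W t}.ncard ≤ N) :
    ∃ W' : κ → Set X, (∀ t, IsOpen (W' t)) ∧ (∀ t, W' t ⊆ W t) ∧ C ⊆ ⋃ t, W' t ∧
      ∀ x, {t | x ∈ W' t}.ncard ≤ N := by
  obtain ⟨v, hCv, hv, hvW⟩ := exists_subset_iUnion_closure_subset hC hW
    (fun x _ => toFinite _) hCW
  set D : Set X := ⋃ T ∈ {T : Finset κ | T.card = N + 1}, ⋂ t ∈ T, closure (v t)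
  have hD : IsClosed D :=
    (toFinite _).isClosed_biUnion fun T _ => isClosed_biInter fun t _ => isClosed_closure
  have hCD : Disjoint C D := by
    refine Set.disjoint_left.2 fun x hxC hxD => (hord x hxC).not_gt ?_
    obtain ⟨T, hT, hx⟩ := mem_iUnion₂.1 hxD
    exact lt_ncard_setOf_mem_iff.2 ⟨T, hT, biInter_mono subset_rfl (fun t _ => hvW t) hx⟩
  refine ⟨fun t => v t \ D, fun t => (hv t).sdiff hD,
    fun t => sdiff_subset.trans (subset_closure.trans (hvW t)), fun x hx => ?_, fun x => ?_⟩
  · obtain ⟨t, ht⟩ := mem_iUnion.1 (hCv hx)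
    exact mem_iUnion.2 ⟨t, ht, Set.disjoint_left.1 hCD hx⟩
  · by_contra! hlt
    obtain ⟨T, hT, hx⟩ := lt_ncard_setOf_mem_iff.1 hlt
    obtain ⟨t, ht⟩ := Finset.card_pos.1 (hT.symm ▸ N.succ_pos : 0 < T.card)
    refine (mem_iInter₂.1 hx t ht).2 (mem_iUnion₂.2 ⟨T, hT, ?_⟩)
    exact biInter_mono subset_rfl (fun s _ => sdiff_subset.trans subset_closure) hx

/-- Peel off the `N`-fold intersections of members of `W`, which are pairwise disjoint; what they
leave uncovered has order at most `N - 1`, so shrink the cover there and recurse. -/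
theorem exists_isDisjointOpenRefinement_layers_of_ncard_le [NormalSpace X] (N : ℕ)
    (hC : IsClosed C) (hW : ∀ t, IsOpen (W t)) (hCW : C ⊆ ⋃ t, W t)
    (hord : ∀ x, {t | x ∈ W t}.ncard ≤ N) :
    ∃ G : Fin N → Set (Set X), (∀ s, IsDisjointOpenRefinement W (G s)) ∧ C ⊆ ⋃ s, ⋃₀ G s := by
  induction N generalizing W C with
  | zero =>
    refine ⟨finZeroElim, finZeroElim, fun x hx => ?_⟩
    obtain ⟨t, ht⟩ := mem_iUnion.1 (hCW hx)
    exact absurd ((ncard_pos (toFinite _)).2 ⟨t, ht⟩) (hord x).not_gt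
  | succ N ih =>
    set ℋ := (fun T : Finset κ => ⋂ t ∈ T, W t) '' {T | T.card = N + 1}
    have hℋ : IsDisjointOpenRefinement W ℋ := .biInter_card_eq hW hord
    have hZ : IsClosed (C \ ⋃₀ ℋ) := hC.sdiff (isOpen_sUnion hℋ.isOpen)
    have hZord : ∀ x ∈ C \ ⋃₀ ℋ, {t | x ∈ W t}.ncard ≤ N := by
      rintro x ⟨-, hx⟩
      by_contra! hlt
      obtain ⟨T, hT, hxT⟩ := lt_ncard_setOf_mem_iff.1 hlt
      exact hx ⟨_, ⟨T, hT, rfl⟩, hxT⟩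
    obtain ⟨W', hW', hW'W, hZW', hW'ord⟩ :=
      exists_shrink_ncard_le hZ hW (sdiff_subset.trans hCW) hZord
    obtain ⟨G, hG, hZG⟩ := ih hZ hW' hZW' hW'ord
    refine ⟨Fin.cons ℋ G, Fin.cases hℋ fun s => (hG s).mono fun t => ⟨t, hW'W t⟩, ?_⟩
    intro x hx
    simp only [mem_iUnion, Fin.exists_fin_succ, Fin.cons_zero, Fin.cons_succ]
    by_cases hxℋ : x ∈ ⋃₀ ℋ
    · exact Or.inl hxℋ
    · exact Or.inr (mem_iUnion.1 (hZG ⟨hx, hxℋ⟩))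

end Layers

section PseudoEMetricSpace

variable {X : Type*} [PseudoEMetricSpace X]

theorem exists_isOpen_superset_pairwise_disjoint {ι : Type*} [Finite ι] {B : ι → Set X}
    (hB : ∀ i, IsClosed (B i)) (hdisj : Pairwise (Disjoint on B)) :
    ∃ O : ι → Set X, (∀ i, IsOpen (O i)) ∧ (∀ i, B i ⊆ O i) ∧ Pairwise (Disjoint on O) := by
  set R : ι → Set X := fun i => ⋃ j ∈ {j | j ≠ i}, B j
  have hBR : ∀ {i j}, i ≠ j → B j ⊆ R i := fun hij => subset_biUnion_of_mem (Ne.symm hij)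
  refine ⟨fun i => {x | Metric.infEDist x (B i) < Metric.infEDist x (R i)},
    fun i => isOpen_lt Metric.continuous_infEDist Metric.continuous_infEDist,
    fun i x hx => ?_, fun i j hij => Set.disjoint_left.2 fun x hxi hxj => ?_⟩
  · have hxR : x ∉ closure (R i) := by
      rw [((toFinite _).isClosed_biUnion fun j _ => hB j).closure_eq]
      intro hxR
      obtain ⟨j, hji, hxj⟩ := mem_iUnion₂.1 hxR
      exact Set.disjoint_left.1 (hdisj hji) hxj hx
    show Metric.infEDist x (B i) < Metric.infEDist x (R i)
    rw [Metric.infEDist_zero_of_mem hx]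
    exact Metric.infEDist_pos_iff_notMem_closure.2 hxR
  · have hxi : Metric.infEDist x (B i) < Metric.infEDist x (R i) := hxi
    have hxj : Metric.infEDist x (B j) < Metric.infEDist x (R j) := hxj
    exact (hxi.trans_le (Metric.infEDist_anti (hBR hij))).trans hxj
      |>.trans_le (Metric.infEDist_anti (hBR hij.symm)) |>.false

/-- The points missed by exactly the layers in `S`, for the various `S` with `#S = n`, form
pairwise disjoint closed sets; separate them by disjoint open sets `O S` and cut a layer `G s`,
`s ∉ S`, down to `O S`. -/
theorem exists_isDisjointOpenRefinement_cover_of_ncard_eq {ι : Type*} {U : ι → Set X} {n k : ℕ}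
    (hnk : n < k) {G : Fin k → Set (Set X)} (hG : ∀ s, IsDisjointOpenRefinement U (G s))
    (hmiss : ∀ x, {s | x ∉ ⋃₀ G s}.ncard ≤ n) :
    ∃ F, IsDisjointOpenRefinement U F ∧ ∀ x, {s | x ∉ ⋃₀ G s}.ncard = n → x ∈ ⋃₀ F := by
  let B : {S : Finset (Fin k) // S.card = n} → Set X := fun S => ⋂ s ∈ S.1, (⋃₀ G s)ᶜ
  have hB : ∀ S, IsClosed (B S) :=
    fun S => isClosed_biInter fun s _ => (isOpen_sUnion (hG s).isOpen).isClosed_compl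
  have hBdisj : Pairwise (Disjoint on B) := fun S S' hne =>
    disjoint_biInter_of_ncard_le hmiss S.2 S'.2 fun h => hne (Subtype.ext h)
  obtain ⟨O, hO, hBO, hOdisj⟩ := exists_isOpen_superset_pairwise_disjoint hB hBdisj
  have hsel : ∀ S : {S : Finset (Fin k) // S.card = n}, ∃ s, s ∉ S.1 := fun S => by
    obtain ⟨s, -, hs⟩ := Finset.exists_mem_notMem_of_card_lt_card (s := S.1) (t := .univ)
      (by rwa [S.2, Finset.card_univ, Fintype.card_fin])
    exact ⟨s, hs⟩
  choose sel hsel using hsel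
  refine ⟨⋃ S, (· ∩ O S) '' G (sel S), .iUnion_inter (fun S => hG (sel S)) hO hOdisj,
    fun x hx => ?_⟩
  have hfin := toFinite {s | x ∉ ⋃₀ G s}
  let S : {S : Finset (Fin k) // S.card = n} :=
    ⟨hfin.toFinset, by rw [← ncard_eq_toFinset_card]; exact hx⟩
  have hxB : x ∈ B S := mem_iInter₂.2 fun s hs => hfin.mem_toFinset.1 hs
  obtain ⟨V, hV, hxV⟩ : x ∈ ⋃₀ G (sel S) := by
    by_contra h
    exact hsel S (hfin.mem_toFinset.2 h)
  exact ⟨V ∩ O S, mem_iUnion.2 ⟨S, V, hV, rfl⟩, hxV, hBO S hxB⟩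

/-- Ostrand's theorem. -/
theorem exists_isDisjointOpenRefinement_layers_of_covDimLE {n : ℕ} (hX : covDimLE X n)
    {ι : Type} [Finite ι] {U : ι → Set X} (hU : ∀ i, IsOpen (U i)) (hUc : ⋃ i, U i = univ)
    {k : ℕ} (hk : n < k) :
    ∃ G : Fin k → Set (Set X), (∀ s, IsDisjointOpenRefinement U (G s)) ∧
      ∀ x, {s | x ∉ ⋃₀ G s}.ncard ≤ n := by
  induction k, hk using Nat.le_induction with
  | base =>
    obtain ⟨κ, V, _, hV, hVc, hVU, hVord⟩ := hX ι U inferInstance hU hUc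
    obtain ⟨G, hG, hcov⟩ :=
      exists_isDisjointOpenRefinement_layers_of_ncard_le (n + 1) isClosed_univ hV hVc.ge hVord
    refine ⟨G, fun s => (hG s).mono hVU, fun x => Nat.lt_succ_iff.1 ?_⟩
    obtain ⟨s, hs⟩ := mem_iUnion.1 (hcov (mem_univ x))
    have hmiss : {s | x ∉ ⋃₀ G s} ≠ univ := (ne_univ_iff_exists_notMem _).2 ⟨s, fun h => h hs⟩
    calc {s | x ∉ ⋃₀ G s}.ncard < (univ : Set (Fin (n + 1))).ncard :=
          ncard_lt_ncard (ssubset_univ_iff.2 hmiss)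
      _ = n + 1 := by simp
  | succ k hk ih =>
    obtain ⟨G, hG, hmiss⟩ := ih
    obtain ⟨F, hF, hFcov⟩ := exists_isDisjointOpenRefinement_cover_of_ncard_eq hk hG hmiss
    refine ⟨Fin.cons F G, Fin.cases hF hG, fun x => ?_⟩
    set M := {s | x ∉ ⋃₀ G s}
    have hsub : {s | x ∉ ⋃₀ (Fin.cons F G : Fin (k + 1) → _) s} ⊆ insert 0 (Fin.succ '' M) := by
      intro s hs
      cases s using Fin.cases with
      | zero => exact mem_insert _ _
      | succ s => exact mem_insert_of_mem _ ⟨s, hs, rfl⟩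
    have hM : (Fin.succ '' M).ncard = M.ncard := ncard_image_of_injective _ (Fin.succ_injective k)
    rcases (hmiss x).lt_or_eq with hlt | heq
    · calc _ ≤ (insert 0 (Fin.succ '' M)).ncard := ncard_le_ncard hsub
        _ ≤ M.ncard + 1 := hM ▸ ncard_insert_le _ _
        _ ≤ n := hlt
    · have hsub' : {s | x ∉ ⋃₀ (Fin.cons F G : Fin (k + 1) → _) s} ⊆ Fin.succ '' M :=
        fun s hs => (hsub hs).resolve_left (by rintro rfl; exact hs (hFcov x heq))
      calc _ ≤ (Fin.succ '' M).ncard := ncard_le_ncard hsub'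
        _ = n := hM.trans heq

end PseudoEMetricSpace

theorem exists_refinement_ncard_le_of_layers {X : Type} [TopologicalSpace X] {ι : Type}
    {U : ι → Set X} {N : ℕ} {G : Fin N → Set (Set X)}
    (hG : ∀ s, IsDisjointOpenRefinement U (G s)) (hcov : ⋃ s, ⋃₀ G s = univ) :
    ∃ (κ : Type) (V : κ → Set X), Finite κ ∧ (∀ k, IsOpen (V k)) ∧ (⋃ k, V k) = univ ∧
      (∀ k, ∃ i, V k ⊆ U i) ∧ ∀ x : X, {k | x ∈ V k}.ncard ≤ N := by
  have := fun s => (hG s).finite.to_subtype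
  refine ⟨Σ s, G s, fun c => c.2, inferInstance, fun c => (hG c.1).isOpen _ c.2.2,
    ?_, fun c => (hG c.1).refines _ c.2.2, fun x => ?_⟩
  · refine eq_univ_of_forall fun x => ?_
    obtain ⟨s, A, hA, hxA⟩ := mem_iUnion.1 (hcov ▸ mem_univ x)
    exact mem_iUnion.2 ⟨⟨s, A, hA⟩, hxA⟩
  · calc {c : Σ s, G s | x ∈ (c.2 : Set X)}.ncard ≤ (univ : Set (Fin N)).ncard := by
          refine ncard_le_ncard_of_injOn Sigma.fst (fun _ _ => mem_univ _) ?_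
          rintro ⟨s, A, hA⟩ hxA ⟨s', A', hA'⟩ hxA' (rfl : s = s')
          by_contra hne
          have hAA' : A ≠ A' := fun h => hne (by subst h; rfl)
          exact Set.disjoint_left.1 ((hG s).pairwise_disjoint hA hA' hAA') hxA hxA'
      _ = N := by simp

theorem covDimLE_prod {P Q : Type} [PseudoMetricSpace P] [PseudoMetricSpace Q] [CompactSpace P]
    [CompactSpace Q] {p q : ℕ} (hP : covDimLE P p) (hQ : covDimLE Q q) :
    covDimLE (P × Q) (p + q) := by
  intro ι U _ hU hUc
  obtain ⟨δ, hδ, hleb⟩ := lebesgue_number_lemma_of_metric isCompact_univ hU hUc.ge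
  obtain ⟨tP, -, htP, hPcov⟩ := finite_cover_balls_of_compact (isCompact_univ (X := P)) hδ
  obtain ⟨tQ, -, htQ, hQcov⟩ := finite_cover_balls_of_compact (isCompact_univ (X := Q)) hδ
  have := htP.to_subtype
  have := htQ.to_subtype
  rw [biUnion_eq_iUnion] at hPcov hQcov
  obtain ⟨GP, hGP, hmissP⟩ := exists_isDisjointOpenRefinement_layers_of_covDimLE hP
    (fun _ => Metric.isOpen_ball) (univ_subset_iff.1 hPcov) (by omega : p < p + q + 1)
  obtain ⟨GQ, hGQ, hmissQ⟩ := exists_isDisjointOpenRefinement_layers_of_covDimLE hQ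
    (fun _ => Metric.isOpen_ball) (univ_subset_iff.1 hQcov) (by omega : q < p + q + 1)
  refine exists_refinement_ncard_le_of_layers
    (G := fun s => image2 (· ×ˢ ·) (GP s) (GQ s))
    (fun s => ((hGP s).prod (hGQ s)).mono fun ab => ?_) (eq_univ_of_forall fun z => ?_)
  · obtain ⟨i, hi⟩ := hleb (ab.1, ab.2) (mem_univ _)
    exact ⟨i, (ball_prod_same _ _ δ).trans_subset hi⟩
  · have hmiss : ({s | z.1 ∉ ⋃₀ GP s} ∪ {s | z.2 ∉ ⋃₀ GQ s}).ncard <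
        (univ : Set (Fin (p + q + 1))).ncard := by
      have := ncard_union_le {s | z.1 ∉ ⋃₀ GP s} {s | z.2 ∉ ⋃₀ GQ s}
      have := hmissP z.1
      have := hmissQ z.2
      rw [ncard_univ, Nat.card_fin]
      omega
    obtain ⟨s, hs⟩ := (ne_univ_iff_exists_notMem _).1 (fun h => hmiss.ne (congrArg ncard h))
    simp only [mem_union, mem_ofPred_eq, not_or, not_not] at hs
    obtain ⟨⟨A, hA, hzA⟩, ⟨B, hB, hzB⟩⟩ := hs
    exact mem_iUnion.2 ⟨s, A ×ˢ B, mem_image2_of_mem hA hB, hzA, hzB⟩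

theorem ENat.sInf_mem_of_ne_top {s : Set ℕ∞} (h : sInf s ≠ ⊤) : sInf s ∈ s :=
  csInf_mem (nonempty_iff_ne_empty.2 fun hs => h (hs ▸ sInf_empty))

section covDim

variable {X : Type*} [TopologicalSpace X]

theorem covDimLE.mono {n m : ℕ} (h : covDimLE X n) (hnm : n ≤ m) : covDimLE X m := by
  intro ι U hι hU hUc
  obtain ⟨κ, V, hκ, hV, hVc, hVU, hord⟩ := h ι U hι hU hUc
  exact ⟨κ, V, hκ, hV, hVc, hVU, fun x => (hord x).trans (by omega)⟩

theorem covDim_le_iff {n : ℕ} : covDim X ≤ n ↔ covDimLE X n := by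
  refine ⟨fun h => ?_, fun h => sInf_le ⟨n, rfl, h⟩⟩
  obtain ⟨m, hm, hX⟩ := ENat.sInf_mem_of_ne_top (ne_top_of_le_ne_top (ENat.natCast_ne_top n) h)
  rw [covDim, hm, Nat.cast_le] at h
  exact hX.mono h

end covDim

theorem covDim_prod_le (P Q : Type) [PseudoMetricSpace P] [PseudoMetricSpace Q] [CompactSpace P]
    [CompactSpace Q] : covDim (P × Q) ≤ covDim P + covDim Q := by
  by_cases hP : covDim P = ⊤
  · simp [hP]
  by_cases hQ : covDim Q = ⊤
  · simp [hQ]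
  obtain ⟨p, hp⟩ := ENat.ne_top_iff_exists.1 hP
  obtain ⟨q, hq⟩ := ENat.ne_top_iff_exists.1 hQ
  rw [← hp, ← hq, ← ENat.natCast_add, covDim_le_iff]
  exact covDimLE_prod (covDim_le_iff.1 hp.ge) (covDim_le_iff.1 hq.ge)

section widim

variable {X Y : Type*} [MetricSpace X] [MetricSpace Y] {ε : ℝ}

theorem widim_le_covDim {P : Type} [MetricSpace P] [CompactSpace P] {f : X → P}
    (hf : Continuous f) (hfε : ∀ x y, f x = f y → dist x y < ε) :
    widim X inferInstance ε ≤ covDim P :=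
  sInf_le ⟨P, inferInstance, inferInstance, f, hf, hfε, rfl⟩

theorem exists_covDim_eq_widim (h : widim X inferInstance ε ≠ ⊤) :
    ∃ (P : Type) (_ : MetricSpace P) (_ : CompactSpace P) (f : X → P), Continuous f ∧
      (∀ x y, f x = f y → dist x y < ε) ∧ covDim P = widim X inferInstance ε :=
  ENat.sInf_mem_of_ne_top h

theorem widim_le_of_isometry {e : X → Y} (he : Isometry e) :
    widim X inferInstance ε ≤ widim Y inferInstance ε := by
  refine le_sInf ?_
  rintro _ ⟨P, _, _, f, hf, hfε, rfl⟩
  exact widim_le_covDim (hf.comp he.continuous) fun x y h => he.dist_eq x y ▸ hfε _ _ h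

theorem widim_prod_le : widim (X × Y) inferInstance ε ≤
    widim X inferInstance ε + widim Y inferInstance ε := by
  by_cases hX : widim X inferInstance ε = ⊤
  · simp [hX]
  by_cases hY : widim Y inferInstance ε = ⊤
  · simp [hY]
  obtain ⟨P, _, _, f, hf, hfε, hP⟩ := exists_covDim_eq_widim hX
  obtain ⟨Q, _, _, g, hg, hgε, hQ⟩ := exists_covDim_eq_widim hY
  have hfgε : ∀ z w : X × Y, Prod.map f g z = Prod.map f g w → dist z w < ε := fun z w h => by
    rw [Prod.dist_eq]
    exact max_lt (hfε _ _ (congrArg Prod.fst h)) (hgε _ _ (congrArg Prod.snd h))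
  calc widim (X × Y) inferInstance ε ≤ covDim (P × Q) := widim_le_covDim (hf.prodMap hg) hfgε
    _ ≤ covDim P + covDim Q := covDim_prod_le P Q
    _ = _ := by rw [hP, hQ]

end widim

theorem widim_pow_subadditive_general (X : Type) [MetricSpace X]
    (ε : ℝ) (m n : ℕ) :
    widim (Fin (m + n) → X) inferInstance ε ≤
      widim (Fin m → X) inferInstance ε + widim (Fin n → X) inferInstance ε :=
  (widim_le_of_isometry (Fin.appendIsometry (α := X) m n).symm.isometry).trans widim_prod_le

/-- subadditivity of `Widim_ε(X^n, ρ_∞)` in `n`, where `X^n` carries the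
sup-metric (the product metric on `Fin n → X`). -/
theorem widim_pow_subadditive (X : Type) [MetricSpace X] [CompactSpace X]
    (ε : ℝ) (hε : 0 < ε) (m n : ℕ) (hm : 0 < m) (hn : 0 < n) :
    widim (Fin (m + n) → X) inferInstance ε ≤
      widim (Fin m → X) inferInstance ε + widim (Fin n → X) inferInstance ε :=
  widim_pow_subadditive_general X ε m n
end

section
/- Let (X, ρ) be a compact metric space with diameter ≤ 1. Equip X^ℤ with the metric D(x, y) = Σ_{i∈ℤ} ρ(x_i, y_i)/2^{|i|} and let σ denote the shift. For n ≥ 1 let D_{(n)}(x, y) = max_{0≤j≤n-1} D(σ^j x, σ^j y). Fix a point p ∈ X and define f_n : X^n → X^ℤ by sending (x_0,…,x_{n-1}) to the bi-infinite sequence equal to x_i in coordinates 0 ≤ i ≤ n−1 and equal to p elsewhere. Then f_n is continuous and distance-increasing from (X^n, ρ_∞) to (X^ℤ, D_{(n)}): ρ_∞(u, v) ≤ D_{(n)}(f_n(u), f_n(v)) for all u, v ∈ X^n. Consequently Widim_ε(X^n, ρ_∞) ≤ Widim_ε(X^ℤ, D_{(n)}) for every ε > 0. -/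
/-!
Two extended sequences `f_n u`, `f_n v` agree off the window `0, …, n-1` and differ by at most
`ρ_∞(u, v)` in each coordinate, so `D_{(n)}(f_n u, f_n v) ≤ (∑ᵢ 2^{-|i|}) ρ_∞(u, v)`: `f_n` is
Lipschitz. Conversely, the shift by `j` moves coordinate `j` to weight `1`, so
`ρ(u_j, v_j) ≤ D_{(n)}(f_n u, f_n v)`. Precomposing a continuous `ε`-embedding of
`(X^ℤ, D_{(n)})` with the continuous distance-increasing map `f_n` gives one of `(X^n, ρ_∞)`.
-/

open Set Filter Topology ENNReal

/-- The map `f_n : X^n → X^ℤ` placing `u` in coordinates `0, …, n−1` and the base point `p`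
elsewhere. -/
noncomputable def extendSeq (X : Type) (p : X) (n : ℕ) (u : Fin n → X) : ℤ → X :=
  fun i => if h : 0 ≤ i ∧ i < n then u ⟨i.toNat, by omega⟩ else p

section WeightedDist

variable {X : Type*} [PseudoMetricSpace X]

noncomputable def weightedDist (x y : ℤ → X) : ℝ :=
  ∑' i : ℤ, dist (x i) (y i) / 2 ^ |i|

/-- The paper's `D_{(n)}`; `fun i => x (i + j)` is `σʲ x`. -/
noncomputable def bowenDist (n : ℕ) (x y : ℤ → X) : ℝ :=
  ⨆ j : Fin n, weightedDist (fun i => x (i + j)) (fun i => y (i + j))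

lemma summable_inv_two_zpow_abs : Summable fun i : ℤ => ((2 : ℝ) ^ |i|)⁻¹ := by
  apply Summable.of_nat_of_neg <;> simpa using summable_geometric_two

lemma dist_div_two_zpow_abs_le {x y : ℤ → X} {C : ℝ} (h : ∀ i, dist (x i) (y i) ≤ C) (i : ℤ) :
    dist (x i) (y i) / 2 ^ |i| ≤ ((2 : ℝ) ^ |i|)⁻¹ * C := by
  rw [div_eq_inv_mul]
  exact mul_le_mul_of_nonneg_left (h i) (by positivity)

lemma summable_dist_div_two_zpow_abs {x y : ℤ → X} {C : ℝ} (h : ∀ i, dist (x i) (y i) ≤ C) :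
    Summable fun i => dist (x i) (y i) / 2 ^ |i| :=
  (summable_inv_two_zpow_abs.mul_right C).of_nonneg_of_le (fun _ => by positivity)
    (dist_div_two_zpow_abs_le h)

lemma weightedDist_le {x y : ℤ → X} {C : ℝ} (h : ∀ i, dist (x i) (y i) ≤ C) :
    weightedDist x y ≤ (∑' i : ℤ, ((2 : ℝ) ^ |i|)⁻¹) * C := by
  rw [← tsum_mul_right]
  exact (summable_dist_div_two_zpow_abs h).tsum_le_tsum (dist_div_two_zpow_abs_le h)
    (summable_inv_two_zpow_abs.mul_right C)

/-- The weight of the coordinate `0` is `1`. -/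
lemma dist_apply_zero_le_weightedDist {x y : ℤ → X} {C : ℝ} (h : ∀ i, dist (x i) (y i) ≤ C) :
    dist (x 0) (y 0) ≤ weightedDist x y := by
  simpa [weightedDist] using (summable_dist_div_two_zpow_abs h).le_tsum 0 fun _ _ => by positivity

lemma bowenDist_nonneg (n : ℕ) (x y : ℤ → X) : 0 ≤ bowenDist n x y :=
  Real.iSup_nonneg fun _ => tsum_nonneg fun _ => by positivity

lemma dist_apply_le_bowenDist {n : ℕ} {x y : ℤ → X} {C : ℝ} (h : ∀ i, dist (x i) (y i) ≤ C)
    (j : Fin n) : dist (x j) (y j) ≤ bowenDist n x y :=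
  calc dist (x j) (y j)
      = dist (x (0 + j)) (y (0 + j)) := by rw [zero_add]
    _ ≤ weightedDist (fun i => x (i + j)) (fun i => y (i + j)) :=
        dist_apply_zero_le_weightedDist (x := fun i => x (i + j)) (y := fun i => y (i + j))
          fun _ => h _
    _ ≤ bowenDist n x y :=
        le_ciSup (f := fun j : Fin n => weightedDist (fun i => x (i + j)) (fun i => y (i + j)))
          (Set.finite_range _).bddAbove j

lemma bowenDist_le {n : ℕ} {x y : ℤ → X} {C : ℝ} (h : ∀ i, dist (x i) (y i) ≤ C) :
    bowenDist n x y ≤ (∑' i : ℤ, ((2 : ℝ) ^ |i|)⁻¹) * C :=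
  Real.iSup_le (fun _ => weightedDist_le fun i => h _)
    (mul_nonneg (tsum_nonneg fun _ => by positivity) (dist_nonneg.trans (h 0)))

end WeightedDist

@[simp]
lemma extendSeq_natCast {X : Type} {p : X} {n : ℕ} (u : Fin n → X) (j : Fin n) :
    extendSeq X p n u j = u j := by
  simp [extendSeq]

section ExtendSeq

variable {X : Type} [PseudoMetricSpace X] {p : X} {n : ℕ}

lemma dist_extendSeq_apply_le (u v : Fin n → X) (k : ℤ) :
    dist (extendSeq X p n u k) (extendSeq X p n v k) ≤ dist u v := by
  unfold extendSeq
  split_ifs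
  · exact dist_le_pi_dist u v _
  · simp

lemma bowenDist_extendSeq_le (u v : Fin n → X) :
    bowenDist n (extendSeq X p n u) (extendSeq X p n v) ≤
      (∑' i : ℤ, ((2 : ℝ) ^ |i|)⁻¹) * dist u v :=
  bowenDist_le (dist_extendSeq_apply_le u v)

lemma dist_le_bowenDist_extendSeq (u v : Fin n → X) :
    dist u v ≤ bowenDist n (extendSeq X p n u) (extendSeq X p n v) :=
  (dist_pi_le_iff (bowenDist_nonneg _ _ _)).2 fun j => by
    simpa using dist_apply_le_bowenDist (dist_extendSeq_apply_le u v) j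

end ExtendSeq

lemma widim_le_of_continuous_of_dist_le {A B : Type*} [mA : MetricSpace A] [mB : MetricSpace B]
    {f : A → B} (hf : Continuous f) (hdist : ∀ u v, dist u v ≤ dist (f u) (f v)) (ε : ℝ) :
    widim A mA ε ≤ widim B mB ε := by
  refine sInf_le_sInf ?_
  rintro k ⟨P, mP, hP, g, hg, hemb, hdim⟩
  exact ⟨P, mP, hP, g ∘ f, hg.comp hf, fun u v h => (hdist u v).trans_lt (hemb _ _ h), hdim⟩

theorem extendSeq_distance_increasing_general (X : Type) [MetricSpace X]
    (p : X) (n : ℕ)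
    (mDn : MetricSpace (ℤ → X))
    (hmDn : ∀ x y : ℤ → X, @dist _ mDn.toDist x y =
      ⨆ j : Fin n, ∑' i : ℤ, dist (x (i + (j : ℤ))) (y (i + (j : ℤ))) / 2 ^ |i|) :
    (@Continuous (Fin n → X) (ℤ → X) _ mDn.toUniformSpace.toTopologicalSpace
      (extendSeq X p n)) ∧
    (∀ u v : Fin n → X,
      dist u v ≤ @dist _ mDn.toDist (extendSeq X p n u) (extendSeq X p n v)) ∧
    (∀ ε : ℝ, 0 < ε →
      widim (Fin n → X) inferInstance ε ≤ widim (ℤ → X) mDn ε) := by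
  let := mDn
  have hD : ∀ x y : ℤ → X, dist x y = bowenDist n x y := hmDn
  have hcont : Continuous[_, mDn.toUniformSpace.toTopologicalSpace] (extendSeq X p n) :=
    (LipschitzWith.of_dist_le' fun u v => (hD _ _).trans_le (bowenDist_extendSeq_le u v)).continuous
  have hinc : ∀ u v : Fin n → X, dist u v ≤ dist (extendSeq X p n u) (extendSeq X p n v) :=
    fun u v => (hD _ _).symm ▸ dist_le_bowenDist_extendSeq u v
  exact ⟨hcont, hinc, fun ε _ => widim_le_of_continuous_of_dist_le hcont hinc ε⟩

/-- `f_n` is continuous and distance-increasing from `(X^n, ρ_∞)` to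
`(X^ℤ, D_{(n)})`, where `D_{(n)}(x,y) = max_{0≤j≤n-1} D(σ^j x, σ^j y)` and
`D(x,y) = Σ_i ρ(x_i,y_i)/2^{|i|}`; consequently
`Widim_ε(X^n, ρ_∞) ≤ Widim_ε(X^ℤ, D_{(n)})` for every `ε > 0`. -/
theorem extendSeq_distance_increasing (X : Type) [MetricSpace X] [CompactSpace X]
    (hdiam : ∀ x y : X, dist x y ≤ 1) (p : X) (n : ℕ) (hn : 0 < n)
    (mDn : MetricSpace (ℤ → X))
    (hmDn : ∀ x y : ℤ → X, @dist _ mDn.toDist x y =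
      ⨆ j : Fin n, ∑' i : ℤ, dist (x (i + (j : ℤ))) (y (i + (j : ℤ))) / 2 ^ |i|) :
    (@Continuous (Fin n → X) (ℤ → X) _ mDn.toUniformSpace.toTopologicalSpace
      (extendSeq X p n)) ∧
    (∀ u v : Fin n → X,
      dist u v ≤ @dist _ mDn.toDist (extendSeq X p n u) (extendSeq X p n v)) ∧
    (∀ ε : ℝ, 0 < ε →
      widim (Fin n → X) inferInstance ε ≤ widim (ℤ → X) mDn ε) :=
  extendSeq_distance_increasing_general X p n mDn hmDn
end
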